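/- arXiv:1701.01416 — 10 statements merged into one kernel-verified Lean document; each statement's English description precedes it below -/
import Mathlib

section
/- For the cycle graph C_n on n ≥ 3 vertices, the Roman {2}-domination number equals ⌈n/2⌉. -/
open Finset in
private lemma filter_adj_eq (m : ℕ) (v : Fin (m+3))
    {inst : DecidablePred fun u => (SimpleGraph.cycleGraph (m+3)).Adj v u} :
    Finset.univ.filter (fun u => (SimpleGraph.cycleGraph (m+3)).Adj v u) = {v - 1, v + 1} := by
  ext u
  simp only [mem_filter, mem_univ, true_and, mem_insert, mem_singleton,
    SimpleGraph.cycleGraph_adj]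
  constructor
  · rintro (h | h)
    · left; rw [← h]; abel
    · right; rw [← h]; abel
  · rintro (h | h) <;> subst h
    · left; abel
    · right; abel

private lemma pm_ne (m : ℕ) (v : Fin (m+3)) : v - 1 ≠ v + 1 := by
  intro h
  have h1 : (1 : Fin (m+3)) = -1 :=
    sub_right_injective (show v - 1 = v - (-1) by rw [h, sub_neg_eq_add])
  have h2 : ((-1 : Fin (m+3)) : ℕ) = m + 2 := Fin.coe_neg_one
  rw [← h1, Fin.val_one] at h2
  omega

private lemma sum_even_ind (N : ℕ) :
    ∑ i ∈ Finset.range N, (if i % 2 = 0 then 1 else 0) = (N+1)/2 := by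
  induction N with
  | zero => simp
  | succ k ih => rw [Finset.sum_range_succ, ih]; split <;> omega

open Finset in
private lemma sum_nbr (m : ℕ) (v : Fin (m+3)) (f : Fin (m+3) → ℕ)
    {inst : DecidablePred fun u => (SimpleGraph.cycleGraph (m+3)).Adj v u} :
    ∑ u ∈ Finset.univ.filter (fun u => (SimpleGraph.cycleGraph (m+3)).Adj v u), f u
      = f (v - 1) + f (v + 1) := by
  rw [filter_adj_eq m v, Finset.sum_pair (pm_ne m v)]

private def gfun (m : ℕ) : Fin (m+3) → ℕ := fun v => if (v : ℕ) % 2 = 0 then 1 else 0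

private lemma g_le (m : ℕ) : ∀ v, gfun m v ≤ 2 := by
  intro v; unfold gfun; split <;> omega

private lemma g_dom (m : ℕ) {inst : ∀ v : Fin (m+3),
    DecidablePred fun u => (SimpleGraph.cycleGraph (m+3)).Adj v u} :
    ∀ v : Fin (m+3), gfun m v = 0 →
      2 ≤ ∑ u ∈ Finset.univ.filter (fun u => (SimpleGraph.cycleGraph (m+3)).Adj v u), gfun m u := by
  intro v hv
  rw [sum_nbr]
  have hvodd : (v : ℕ) % 2 = 1 := by
    by_contra hc
    have : (v : ℕ) % 2 = 0 := by omega
    simp [gfun, this] at hv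
  have hv0 : v ≠ 0 := by
    intro h; rw [h] at hvodd; simp at hvodd
  have h1 : ((v - 1 : Fin (m+3)) : ℕ) % 2 = 0 := by
    rw [Fin.coe_sub_one, if_neg hv0]; omega
  have h2 : ((v + 1 : Fin (m+3)) : ℕ) % 2 = 0 := by
    rw [Fin.val_add_one]
    split
    · rfl
    · omega
  simp [gfun, h1, h2]


open Finset Classical in
/-- The Roman `{2}`-domination number of a finite graph: the minimum weight of a
function `f : V → {0,1,2}` such that every vertex `v` with `f v = 0` satisfies
`∑_{u ∈ N(v)} f u ≥ 2`. -/
noncomputable def roman2 {V : Type*} [Fintype V] (G : SimpleGraph V) : ℕ :=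
  sInf {w | ∃ f : V → ℕ, (∀ v, f v ≤ 2) ∧
    (∀ v, f v = 0 → 2 ≤ ∑ u ∈ Finset.univ.filter (fun u => G.Adj v u), f u) ∧
    w = ∑ v, f v}

open Finset Classical in
/-- The domination number. -/
noncomputable def domNum {V : Type*} [Fintype V] (G : SimpleGraph V) : ℕ :=
  sInf {k | ∃ S : Finset V, S.card = k ∧ ∀ v, v ∉ S → ∃ u ∈ S, G.Adj u v}

open Finset Classical in
/-- The 2-domination number. -/
noncomputable def twoDomNum {V : Type*} [Fintype V] (G : SimpleGraph V) : ℕ :=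
  sInf {k | ∃ S : Finset V, S.card = k ∧
    ∀ v, v ∉ S → 2 ≤ (S.filter (fun u => G.Adj u v)).card}

theorem roman2_cycleGraph (n : ℕ) (hn : 3 ≤ n) :
    roman2 (SimpleGraph.cycleGraph n) = (n + 1) / 2 := by
  obtain ⟨m, rfl⟩ : ∃ m, n = m + 3 := ⟨n - 3, by omega⟩
  classical
  have hgsum : ∑ v, gfun m v = (m + 3 + 1) / 2 := by
    rw [show gfun m = fun v : Fin (m+3) => if (v:ℕ) % 2 = 0 then 1 else 0 from rfl,
      Fin.sum_univ_eq_sum_range (fun i => if i % 2 = 0 then 1 else 0)]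
    exact sum_even_ind _
  rw [roman2]
  refine le_antisymm (Nat.sInf_le ⟨gfun m, g_le m, g_dom m, hgsum.symm⟩)
    (le_csInf ⟨_, ⟨gfun m, g_le m, g_dom m, hgsum.symm⟩⟩ ?_)
  rintro w ⟨f, hle, hdom, rfl⟩
  have key : ∀ v : Fin (m+3), 2 ≤ f (v - 1) + f (v + 1) + 2 * f v := by
    intro v
    rcases Nat.eq_zero_or_pos (f v) with h0 | h1
    · have := hdom v h0
      rw [sum_nbr] at this
      omega
    · omega
  have e1 : ∑ v : Fin (m+3), f (v - 1) = ∑ v, f v :=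
    Fintype.sum_equiv (Equiv.subRight 1) _ _ (fun v => rfl)
  have e2 : ∑ v : Fin (m+3), f (v + 1) = ∑ v, f v :=
    Fintype.sum_equiv (Equiv.addRight 1) _ _ (fun v => rfl)
  have e3 : ∑ v : Fin (m+3), (f (v - 1) + f (v + 1) + 2 * f v) = 4 * ∑ v, f v := by
    rw [Finset.sum_add_distrib, Finset.sum_add_distrib, e1, e2, ← Finset.mul_sum]
    ring
  have lb : 2 * (m + 3) ≤ ∑ v : Fin (m+3), (f (v - 1) + f (v + 1) + 2 * f v) := by
    calc 2 * (m + 3) = ∑ _v : Fin (m+3), 2 := by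
          simp [Finset.card_univ, mul_comm]
      _ ≤ _ := Finset.sum_le_sum (fun v _ => key v)
  rw [e3] at lb
  omega
end

section
/- For the path graph P_n on n ≥ 1 vertices, the Roman {2}-domination number equals ⌈(n+1)/2⌉. -/
open Finset

/-- extension of `f : Fin n → ℕ` to `ℕ` by zero. -/
def rgg (n : ℕ) (f : Fin n → ℕ) (i : ℕ) : ℕ := if h : i < n then f ⟨i, h⟩ else 0

lemma rgg_lt {n : ℕ} (f : Fin n → ℕ) {i : ℕ} (h : i < n) : rgg n f i = f ⟨i, h⟩ :=
  dif_pos h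

lemma rgg_ge {n : ℕ} (f : Fin n → ℕ) {i : ℕ} (h : ¬ i < n) : rgg n f i = 0 :=
  dif_neg h

lemma rnbr_sum {n : ℕ} (f : Fin n → ℕ) (v : Fin n)
    [inst : DecidablePred fun u => (SimpleGraph.pathGraph n).Adj v u] :
    ∑ u ∈ Finset.univ.filter (fun u => (SimpleGraph.pathGraph n).Adj v u), f u
      = (if v.1 = 0 then 0 else rgg n f (v.1 - 1)) + rgg n f (v.1 + 1) := by
  classical
  rw [Finset.sum_filter]
  have key : ∀ u : Fin n,
      (if (SimpleGraph.pathGraph n).Adj v u then f u else 0)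
        = (if u.1 + 1 = v.1 then f u else 0) + (if u.1 = v.1 + 1 then f u else 0) := by
    intro u
    simp only [SimpleGraph.pathGraph_adj]
    by_cases h1 : u.1 + 1 = v.1 <;> by_cases h2 : u.1 = v.1 + 1 <;>
      simp [h1, h2] <;> omega
  rw [Finset.sum_congr rfl (fun u _ => key u), Finset.sum_add_distrib]
  congr 1
  · by_cases h0 : v.1 = 0
    · rw [if_pos h0]
      apply Finset.sum_eq_zero
      intro u _
      rw [if_neg]; omega
    · rw [if_neg h0]
      have hlt : v.1 - 1 < n := by omega
      rw [rgg_lt f hlt]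
      rw [show (fun u : Fin n => (if u.1 + 1 = v.1 then f u else 0))
            = fun u : Fin n => (if u = ⟨v.1 - 1, hlt⟩ then f u else 0) from ?_]
      · rw [Finset.sum_ite_eq' Finset.univ, if_pos (Finset.mem_univ _)]
      · funext u
        refine if_congr ?_ rfl rfl
        rw [Fin.ext_iff]
        simp only
        omega
  · by_cases hlt : v.1 + 1 < n
    · rw [rgg_lt f hlt]
      rw [show (fun u : Fin n => (if u.1 = v.1 + 1 then f u else 0))
            = fun u : Fin n => (if u = ⟨v.1 + 1, hlt⟩ then f u else 0) from ?_]
      · rw [Finset.sum_ite_eq' Finset.univ, if_pos (Finset.mem_univ _)]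
      · funext u
        refine if_congr ?_ rfl rfl
        rw [Fin.ext_iff]
    · rw [rgg_ge f hlt]
      apply Finset.sum_eq_zero
      intro u _
      rw [if_neg]; omega

lemma rsum_eq {n : ℕ} (f : Fin n → ℕ) : ∑ v, f v = ∑ i ∈ Finset.range n, rgg n f i := by
  rw [← Fin.sum_univ_eq_sum_range]
  exact Finset.sum_congr rfl (fun v _ => (rgg_lt f v.2).symm)

-- shift lemmas
lemma rshift1 {n : ℕ} (g : ℕ → ℕ) (hg : g n = 0) :
    g 0 + ∑ i ∈ Finset.range n, g (i + 1) = ∑ i ∈ Finset.range n, g i := by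
  have h1 := Finset.sum_range_succ' g n
  have h2 := Finset.sum_range_succ g n
  omega

lemma rshift2 {n : ℕ} (g : ℕ → ℕ) (hn : 1 ≤ n) :
    (∑ i ∈ Finset.range n, if i = 0 then 0 else g (i - 1)) + g (n - 1)
      = ∑ i ∈ Finset.range n, g i := by
  obtain ⟨m, rfl⟩ : ∃ m, n = m + 1 := ⟨n - 1, by omega⟩
  have h1 := Finset.sum_range_succ' (fun i => if i = 0 then 0 else g (i - 1)) m
  have h2 := Finset.sum_range_succ g m
  simp only [Nat.add_sub_cancel] at *
  rw [h1, h2]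
  simp

-- the "all evens plus last" function used for the upper bound
lemma rupper_sum (n : ℕ) (hn : 1 ≤ n) :
    ∑ i ∈ Finset.range n, (if i % 2 = 0 then 1 else if i = n - 1 then 1 else 0) = (n + 2) / 2 := by
  have evens : ∀ m : ℕ, ∑ i ∈ Finset.range m, (if i % 2 = 0 then 1 else 0) = (m + 1) / 2 := by
    intro m
    induction m with
    | zero => simp
    | succ k ih =>
      rw [Finset.sum_range_succ, ih]
      rcases Nat.even_or_odd k with h | h
      · have hk := Nat.even_iff.mp h
        rw [if_pos hk]; omega
      · have hk := Nat.odd_iff.mp h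
        rw [if_neg (by omega : ¬ k % 2 = 0)]
        omega
  obtain ⟨m, rfl⟩ : ∃ m, n = m + 1 := ⟨n - 1, by omega⟩
  rw [Finset.sum_range_succ]
  have heq : ∀ i ∈ Finset.range m,
      (if i % 2 = 0 then 1 else if i = m + 1 - 1 then 1 else 0) = if i % 2 = 0 then 1 else 0 := by
    intro i hi
    rw [Finset.mem_range] at hi
    by_cases h : i % 2 = 0
    · simp [h]
    · rw [if_neg h, if_neg h, if_neg (by omega)]
  rw [Finset.sum_congr rfl heq, evens]
  have hlast : (if m % 2 = 0 then 1 else if m = m + 1 - 1 then (1:ℕ) else 0) = 1 := by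
    by_cases h : m % 2 = 0
    · simp [h]
    · rw [if_neg h, if_pos (by omega)]
  rw [hlast]
  omega

theorem roman2_pathGraph (n : ℕ) (hn : 1 ≤ n) :
    roman2 (SimpleGraph.pathGraph n) = (n + 2) / 2 := by
  classical
  unfold roman2
  have hmem : (n + 2) / 2 ∈ {w | ∃ f : Fin n → ℕ, (∀ v, f v ≤ 2) ∧
      (∀ v, f v = 0 → 2 ≤ ∑ u ∈ Finset.univ.filter (fun u => (SimpleGraph.pathGraph n).Adj v u), f u) ∧
      w = ∑ v, f v} := by
    refine ⟨fun v => if v.1 % 2 = 0 then 1 else if v.1 = n - 1 then 1 else 0, ?_, ?_, ?_⟩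
    · intro v; dsimp only; split_ifs <;> omega
    · intro v hv
      dsimp only at hv
      rw [rnbr_sum]
      have hv2 : ¬ v.1 % 2 = 0 ∧ ¬ v.1 = n - 1 := by
        by_contra h
        push_neg at h
        by_cases h1 : v.1 % 2 = 0
        · simp [h1] at hv
        · rw [if_neg h1, if_pos (h h1)] at hv; exact absurd hv one_ne_zero
      obtain ⟨hodd, hne⟩ := hv2
      have hv0 : v.1 ≠ 0 := by omega
      have hvn : v.1 + 1 < n := by have := v.2; omega
      have hvm : v.1 - 1 < n := by omega
      rw [if_neg hv0, rgg_lt _ hvm, rgg_lt _ hvn]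
      dsimp only
      rw [if_pos (by omega : (v.1 - 1) % 2 = 0), if_pos (by omega : (v.1 + 1) % 2 = 0)]
    · rw [rsum_eq]
      rw [← rupper_sum n hn]
      apply Finset.sum_congr rfl
      intro i hi
      rw [Finset.mem_range] at hi
      rw [rgg_lt _ hi]
  apply le_antisymm
  · exact Nat.sInf_le hmem
  · apply le_csInf ⟨_, hmem⟩
    rintro w ⟨f, hf2, hdom, rfl⟩
    set g := rgg n f with hg
    have hgn : ∀ i, ¬ i < n → g i = 0 := fun i h => rgg_ge f h
    set t : ℕ → ℕ := fun i => 2 * g i + ((if i = 0 then 0 else g (i - 1)) + g (i + 1)) with ht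
    have hW : ∑ v, f v = ∑ i ∈ Finset.range n, g i := rsum_eq f
    set W := ∑ i ∈ Finset.range n, g i with hWdef
    -- key identity
    have hid : ∑ i ∈ Finset.range n, t i + g 0 + g (n - 1) = 4 * W := by
      have hsplit : ∑ i ∈ Finset.range n, t i
          = 2 * W + ((∑ i ∈ Finset.range n, if i = 0 then 0 else g (i - 1))
            + ∑ i ∈ Finset.range n, g (i + 1)) := by
        simp only [ht, hWdef]
        rw [Finset.sum_add_distrib, Finset.sum_add_distrib, ← Finset.mul_sum]
      have h1 := rshift1 g (hgn n (lt_irrefl n))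
      have h2 := rshift2 g hn
      omega
    -- per-vertex lower bound
    have hterm : ∀ i, i < n → g i = 0 → 2 ≤ (if i = 0 then 0 else g (i - 1)) + g (i + 1) := by
      intro i hi h0
      have := hdom ⟨i, hi⟩ (by rw [← rgg_lt f hi]; exact h0)
      rw [rnbr_sum] at this
      exact this
    have htge : ∀ i ∈ Finset.range n, 2 ≤ t i := by
      intro i hi
      rw [Finset.mem_range] at hi
      rcases Nat.eq_zero_or_pos (g i) with h0 | h0
      · have := hterm i hi h0
        simp only [ht]; omega
      · simp only [ht]; omega
    -- strengthened bound: 2n + 2 ≤ ∑ t  OR handle directly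
    have hmain : n + 1 ≤ 2 * W := by
      rcases Nat.eq_or_lt_of_le hn with h1 | h1
      · -- n = 1
        rcases Nat.eq_zero_or_pos (g 0) with h0 | h0
        · exfalso
          have := hterm 0 (by omega) h0
          rw [if_pos rfl] at this
          have h1' : g (0 + 1) = 0 := hgn _ (by omega)
          omega
        · have : g 0 ≤ W := by
            rw [hWdef, ← h1]
            simp
          omega
      · -- n ≥ 2
        have h2n : 2 ≤ n := h1
        have key : 2 * n + 2 ≤ ∑ i ∈ Finset.range n, t i + g 0 + g (n - 1) := by
          rcases Nat.eq_zero_or_pos (g 0) with hz0 | hz0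
          · -- strengthen at index 1
            have hg1 : 2 ≤ g (0 + 1) := by
              have := hterm 0 (by omega) hz0
              rw [if_pos rfl] at this; omega
            have hg1' : 2 ≤ g 1 := by
              have he : (0 : ℕ) + 1 = 1 := rfl
              rwa [he] at hg1
            have hsum : ∑ i ∈ Finset.range n, (2 + if i = 1 then 2 else 0) ≤
                ∑ i ∈ Finset.range n, t i := by
              apply Finset.sum_le_sum
              intro i hi
              by_cases h : i = 1
              · subst h
                rw [if_pos rfl]
                have ht1 : t 1 = 2 * g 1 + ((if (1:ℕ) = 0 then 0 else g (1 - 1)) + g (1 + 1)) := rfl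
                rw [ht1, if_neg (by omega : ¬ (1:ℕ) = 0)]
                omega
              · rw [if_neg h]; simpa using htge i hi
            have hcount : ∑ i ∈ Finset.range n, (2 + if i = 1 then 2 else 0) = 2 * n + 2 := by
              rw [Finset.sum_add_distrib, Finset.sum_const, Finset.card_range,
                Finset.sum_ite_eq' (Finset.range n) 1 (fun _ => 2),
                if_pos (Finset.mem_range.mpr (by omega)), smul_eq_mul]
              omega
            omega
          · rcases Nat.eq_zero_or_pos (g (n - 1)) with hzl | hzl
            · -- strengthen at index n - 2
              have hg2 : 2 ≤ g (n - 2) := by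
                have := hterm (n - 1) (by omega) hzl
                rw [if_neg (by omega), hgn (n - 1 + 1) (by omega)] at this
                have h2 : 2 ≤ g (n - 1 - 1) := by omega
                rwa [show n - 1 - 1 = n - 2 by omega] at h2
              have hsum : ∑ i ∈ Finset.range n, (2 + if i = n - 2 then 2 else 0) ≤
                  ∑ i ∈ Finset.range n, t i := by
                apply Finset.sum_le_sum
                intro i hi
                by_cases h : i = n - 2
                · subst h
                  rw [if_pos rfl]
                  have ht2 : t (n-2) = 2 * g (n-2) + ((if n-2 = 0 then 0 else g (n-2 - 1)) + g (n-2 + 1)) := rfl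
                  rw [ht2]
                  omega
                · rw [if_neg h]; simpa using htge i hi
              have hcount : ∑ i ∈ Finset.range n, (2 + if i = n - 2 then 2 else 0) = 2 * n + 2 := by
                rw [Finset.sum_add_distrib, Finset.sum_const, Finset.card_range,
                  Finset.sum_ite_eq' (Finset.range n) (n - 2) (fun _ => 2),
                  if_pos (Finset.mem_range.mpr (by omega)), smul_eq_mul]
                omega
              omega
            · have hsum : 2 * n ≤ ∑ i ∈ Finset.range n, t i := by
                calc 2 * n = ∑ _i ∈ Finset.range n, 2 := by
                      rw [Finset.sum_const, Finset.card_range, smul_eq_mul]; omega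
                  _ ≤ _ := Finset.sum_le_sum htge
              omega
        omega
    rw [hW]
    omega
end

section
/- If G is a graph with maximum degree Δ(G) < n−2 (n = |V(G)|), then γ_{R2}(G) = 3 if and only if γ_2(G) = 3, where γ_2 is the 2-domination number. -/
open Finset Classical in
-- key structural lemma: any Roman {2}-dominating function of weight ≤ 3 takes values ≤ 1,
-- hence its support is a 2-dominating set of the same size.
lemma aux_mem_twoDom {V : Type*} [Fintype V] (G : SimpleGraph V) [DecidableRel G.Adj]
    (hΔ : G.maxDegree + 2 < Fintype.card V)
    (f : V → ℕ) (hf2 : ∀ v, f v ≤ 2)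
    (hdom : ∀ v, f v = 0 → 2 ≤ ∑ u ∈ Finset.univ.filter (fun u => G.Adj v u), f u)
    (hw : ∑ v, f v ≤ 3) :
    ∃ S : Finset V, S.card = ∑ v, f v ∧
      ∀ v, v ∉ S → 2 ≤ (S.filter (fun u => G.Adj u v)).card := by
  classical
  -- Step 1: all values ≤ 1
  have hone : ∀ v, f v ≤ 1 := by
    intro a
    by_contra ha
    have hfa : f a = 2 := le_antisymm (hf2 a) (by omega)
    -- sum over the rest is ≤ 1
    have hsplit : ∑ v, f v = f a + ∑ v ∈ Finset.univ.erase a, f v := by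
      rw [← Finset.add_sum_erase _ _ (Finset.mem_univ a)]
    have hrest : ∑ v ∈ Finset.univ.erase a, f v ≤ 1 := by omega
    -- every vertex ≠ a with f v = 0 is adjacent to a
    have hadj : ∀ v, v ≠ a → f v = 0 → G.Adj a v := by
      intro v hv hv0
      by_contra hnadj
      have h2 := hdom v hv0
      have hsub : (Finset.univ.filter (fun u => G.Adj v u)) ⊆ Finset.univ.erase a := by
        intro u hu
        simp only [Finset.mem_filter, Finset.mem_univ, true_and] at hu
        refine Finset.mem_erase.2 ⟨?_, Finset.mem_univ u⟩
        rintro rfl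
        exact hnadj hu.symm
      have := Finset.sum_le_sum_of_subset hsub (f := f)
      omega
    -- the set of such vertices is large
    have hcard1 : ((Finset.univ.erase a).filter (fun v => f v ≠ 0)).card ≤ 1 := by
      calc ((Finset.univ.erase a).filter (fun v => f v ≠ 0)).card
          = ∑ _v ∈ (Finset.univ.erase a).filter (fun v => f v ≠ 0), 1 :=
            Finset.card_eq_sum_ones _
        _ ≤ ∑ v ∈ (Finset.univ.erase a).filter (fun v => f v ≠ 0), f v := by
            apply Finset.sum_le_sum
            intro i hi
            have := (Finset.mem_filter.1 hi).2
            omega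
        _ ≤ ∑ v ∈ Finset.univ.erase a, f v :=
            Finset.sum_le_sum_of_subset (Finset.filter_subset _ _)
        _ ≤ 1 := hrest
    have hsubN : (Finset.univ.erase a).filter (fun v => f v = 0) ⊆ G.neighborFinset a := by
      intro v hv
      rw [Finset.mem_filter, Finset.mem_erase] at hv
      rw [SimpleGraph.mem_neighborFinset]
      exact hadj v hv.1.1 hv.2
    have hdeg : Fintype.card V - 2 ≤ G.degree a := by
      have h1 : ((Finset.univ.erase a).filter (fun v => f v = 0)).card ≤ G.degree a := by
        rw [← SimpleGraph.card_neighborFinset_eq_degree]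
        exact Finset.card_le_card hsubN
      have h2 : ((Finset.univ.erase a).filter (fun v => f v = 0)).card
          + ((Finset.univ.erase a).filter (fun v => f v ≠ 0)).card
          = (Finset.univ.erase a).card := Finset.card_filter_add_card_filter_not _
      have h3 : (Finset.univ.erase a).card = Fintype.card V - 1 := by
        rw [Finset.card_erase_of_mem (Finset.mem_univ a), Finset.card_univ]
      omega
    have hmax := G.degree_le_maxDegree a
    omega
  -- Step 2: support is a 2-dominating set
  refine ⟨Finset.univ.filter (fun v => f v ≠ 0), ?_, ?_⟩
  · rw [Finset.card_eq_sum_ones]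
    rw [← Finset.sum_filter_ne_zero (s := Finset.univ) (f := f)]
    apply Finset.sum_congr rfl
    intro x hx
    have := (Finset.mem_filter.1 hx).2
    have := hone x
    omega
  · intro v hv
    have hv0 : f v = 0 := by
      by_contra h
      exact hv (Finset.mem_filter.2 ⟨Finset.mem_univ v, h⟩)
    have h2 := hdom v hv0
    have hle : ∑ u ∈ Finset.univ.filter (fun u => G.Adj v u), f u
        ≤ ((Finset.univ.filter (fun v => f v ≠ 0)).filter (fun u => G.Adj u v)).card := by
      rw [← Finset.sum_filter_ne_zero]
      calc ∑ u ∈ (Finset.univ.filter (fun u => G.Adj v u)).filter (fun u => f u ≠ 0), f u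
          ≤ ∑ _u ∈ (Finset.univ.filter (fun u => G.Adj v u)).filter (fun u => f u ≠ 0), 1 :=
            Finset.sum_le_sum (fun i _ => hone i)
        _ = ((Finset.univ.filter (fun u => G.Adj v u)).filter (fun u => f u ≠ 0)).card :=
            (Finset.card_eq_sum_ones _).symm
        _ ≤ _ := by
            apply Finset.card_le_card
            intro u hu
            simp only [Finset.mem_filter, Finset.mem_univ, true_and] at hu ⊢
            exact ⟨hu.2, hu.1.symm⟩
    omega

open Finset Classical in
lemma aux_roman2_le {V : Type*} [Fintype V] (G : SimpleGraph V) [DecidableRel G.Adj]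
    {k : ℕ} (hk : k ∈ {k | ∃ S : Finset V, S.card = k ∧
      ∀ v, v ∉ S → 2 ≤ (S.filter (fun u => G.Adj u v)).card}) :
    k ∈ {w | ∃ f : V → ℕ, (∀ v, f v ≤ 2) ∧
      (∀ v, f v = 0 → 2 ≤ ∑ u ∈ Finset.univ.filter (fun u => G.Adj v u), f u) ∧
      w = ∑ v, f v} := by
  classical
  obtain ⟨S, hScard, hSdom⟩ := hk
  refine ⟨fun v => if v ∈ S then 1 else 0, ?_, ?_, ?_⟩
  · intro v; by_cases h : v ∈ S <;> simp [h]
  · intro v hv0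
    have hvS : v ∉ S := by
      intro h; simp [h] at hv0
    have h2 := hSdom v hvS
    calc (2 : ℕ) ≤ (S.filter (fun u => G.Adj u v)).card := h2
      _ ≤ ∑ u ∈ Finset.univ.filter (fun u => G.Adj v u), if u ∈ S then 1 else 0 := by
          rw [Finset.sum_ite_mem, ← Finset.card_eq_sum_ones]
          apply Finset.card_le_card
          intro u hu
          rw [Finset.mem_filter] at hu
          rw [Finset.mem_inter, Finset.mem_filter]
          exact ⟨⟨Finset.mem_univ u, hu.2.symm⟩, hu.1⟩
  · rw [Finset.sum_ite_mem, Finset.univ_inter, ← Finset.card_eq_sum_ones]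
    exact hScard.symm


lemma roman2_eq {V : Type*} [Fintype V] (G : SimpleGraph V) [DecidableRel G.Adj] :
    roman2 G = sInf {w | ∃ f : V → ℕ, (∀ v, f v ≤ 2) ∧
      (∀ v, f v = 0 → 2 ≤ ∑ u ∈ Finset.univ.filter (fun u => G.Adj v u), f u) ∧
      w = ∑ v, f v} := by
  unfold roman2
  congr!

lemma twoDomNum_eq {V : Type*} [Fintype V] (G : SimpleGraph V) [DecidableRel G.Adj] :
    twoDomNum G = sInf {k | ∃ S : Finset V, S.card = k ∧
      ∀ v, v ∉ S → 2 ≤ (S.filter (fun u => G.Adj u v)).card} := by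
  unfold twoDomNum
  congr!

theorem roman2_eq_three_iff_twoDomNum {V : Type*} [Fintype V] (G : SimpleGraph V)
    [DecidableRel G.Adj] (hΔ : G.maxDegree + 2 < Fintype.card V) :
    roman2 G = 3 ↔ twoDomNum G = 3 := by
  rw [roman2_eq, twoDomNum_eq]
  have hne_R : {w | ∃ f : V → ℕ, (∀ v, f v ≤ 2) ∧
      (∀ v, f v = 0 → 2 ≤ ∑ u ∈ Finset.univ.filter (fun u => G.Adj v u), f u) ∧
      w = ∑ v, f v}.Nonempty :=
    ⟨∑ _v : V, 2, fun _ => 2, fun _ => le_refl 2, fun v hv => by simp at hv, rfl⟩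
  have hne_T : {k | ∃ S : Finset V, S.card = k ∧
      ∀ v, v ∉ S → 2 ≤ (S.filter (fun u => G.Adj u v)).card}.Nonempty :=
    ⟨(Finset.univ : Finset V).card, Finset.univ, rfl,
      fun v hv => absurd (Finset.mem_univ v) hv⟩
  have hRT : sInf {w | ∃ f : V → ℕ, (∀ v, f v ≤ 2) ∧
      (∀ v, f v = 0 → 2 ≤ ∑ u ∈ Finset.univ.filter (fun u => G.Adj v u), f u) ∧
      w = ∑ v, f v} ≤ sInf {k | ∃ S : Finset V, S.card = k ∧
      ∀ v, v ∉ S → 2 ≤ (S.filter (fun u => G.Adj u v)).card} :=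
    Nat.sInf_le (aux_roman2_le G (Nat.sInf_mem hne_T))
  obtain ⟨f, hf2, hdom, hw⟩ := Nat.sInf_mem hne_R
  constructor
  · intro h
    rw [h] at hw
    obtain ⟨S, hS, hSdom⟩ := aux_mem_twoDom G hΔ f hf2 hdom (le_of_eq hw.symm)
    have hScard3 : S.card = 3 := hS.trans hw.symm
    have hT3 : sInf {k | ∃ S : Finset V, S.card = k ∧
        ∀ v, v ∉ S → 2 ≤ (S.filter (fun u => G.Adj u v)).card} ≤ 3 :=
      Nat.sInf_le ⟨S, hScard3, hSdom⟩
    exact le_antisymm hT3 (by rw [← h]; exact hRT)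
  · intro h
    rcases lt_or_ge (sInf {w | ∃ f : V → ℕ, (∀ v, f v ≤ 2) ∧
      (∀ v, f v = 0 → 2 ≤ ∑ u ∈ Finset.univ.filter (fun u => G.Adj v u), f u) ∧
      w = ∑ v, f v}) 3 with hlt | hge
    · exfalso
      have hwle : ∑ v, f v ≤ 3 := by rw [← hw]; exact hlt.le
      obtain ⟨S, hS, hSdom⟩ := aux_mem_twoDom G hΔ f hf2 hdom hwle
      have hT : sInf {k | ∃ S : Finset V, S.card = k ∧
          ∀ v, v ∉ S → 2 ≤ (S.filter (fun u => G.Adj u v)).card} ≤ ∑ v, f v :=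
        Nat.sInf_le ⟨S, hS, hSdom⟩
      rw [h, ← hw] at hT
      exact absurd hT (Nat.not_le.2 hlt)
    · exact le_antisymm (by rw [← h]; exact hRT) hge
end

section
/- If G is a graph with Δ(G) ≤ n−3, γ_2(G) ≥ 4, and domination number γ(G) = 2, then γ_{R2}(G) = 4. -/
theorem roman2_eq_four_of_domNum {V : Type*} [Fintype V] (G : SimpleGraph V)
    [DecidableRel G.Adj] (hΔ : G.maxDegree + 3 ≤ Fintype.card V)
    (h2 : 4 ≤ twoDomNum G) (hdom : domNum G = 2) :
    roman2 G = 4 := by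
  classical
  -- extract a dominating set of size 2
  have hdomset : ∃ S : Finset V, S.card = 2 ∧ ∀ v, v ∉ S → ∃ u ∈ S, G.Adj u v := by
    have hne : {k | ∃ S : Finset V, S.card = k ∧ ∀ v, v ∉ S → ∃ u ∈ S, G.Adj u v}.Nonempty :=
      ⟨(Finset.univ : Finset V).card, Finset.univ, rfl, fun v hv => absurd (Finset.mem_univ v) hv⟩
    have hmem := Nat.sInf_mem hne
    unfold domNum at hdom
    rw [hdom] at hmem
    exact hmem
  obtain ⟨S, hScard, hSdom⟩ := hdomset
  have hupper : roman2 G ≤ 4 := by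
    apply Nat.sInf_le
    refine ⟨fun v => if v ∈ S then 2 else 0,
      fun v => by by_cases h : v ∈ S <;> simp [h], ?_, ?_⟩
    · intro v hv
      simp only at hv
      have hvS : v ∉ S := by
        intro h; simp [h] at hv
      obtain ⟨u, huS, hadj⟩ := hSdom v hvS
      have hu : u ∈ Finset.univ.filter (fun w => G.Adj v w) := by simp [hadj.symm]
      have hle := Finset.single_le_sum (f := fun w => if w ∈ S then (2:ℕ) else 0)
        (fun i _ => by positivity) hu
      have hgoal : 2 ≤ ∑ w ∈ Finset.univ.filter (fun w => G.Adj v w),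
          (if w ∈ S then (2:ℕ) else 0) := by simpa [huS] using hle
      refine le_trans hgoal (le_of_eq ?_)
      exact Finset.sum_congr (by ext w; simp) (fun _ _ => rfl)
    · rw [Finset.sum_ite_mem, Finset.univ_inter, Finset.sum_const, hScard]
      norm_num
  have hlower : 4 ≤ roman2 G := by
    apply le_csInf
    · exact ⟨∑ v : V, 2, fun _ => 2, fun v => le_refl 2, fun v hv => by simp at hv, rfl⟩
    · rintro w ⟨f, hf1, hf2, rfl⟩
      by_contra hlt
      push_neg at hlt
      have hsum : ∑ v, f v ≤ 3 := by omega
      by_cases hex : ∃ u, f u = 2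
      · obtain ⟨u, hu⟩ := hex
        have hrest : ∑ w ∈ Finset.univ.erase u, f w ≤ 1 := by
          have h := Finset.add_sum_erase Finset.univ f (Finset.mem_univ u)
          omega
        set T := (insert u (G.neighborFinset u))ᶜ with hT
        have hTcard : 2 ≤ T.card := by
          rw [hT, Finset.card_compl, Finset.card_insert_of_notMem (by simp),
            G.card_neighborFinset_eq_degree]
          have := G.degree_le_maxDegree u
          omega
        have hv : ∃ v ∈ T, f v = 0 := by
          by_contra hall
          push_neg at hall
          have hsub : T ⊆ Finset.univ.erase u := by
            intro v hv
            simp only [hT, Finset.mem_compl, Finset.mem_insert] at hv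
            push_neg at hv
            simp [hv.1]
          have hle : T.card ≤ ∑ w ∈ Finset.univ.erase u, f w := by
            calc T.card = ∑ v ∈ T, 1 := by simp
              _ ≤ ∑ v ∈ T, f v := Finset.sum_le_sum (fun v hv =>
                  Nat.one_le_iff_ne_zero.2 (hall v hv))
              _ ≤ ∑ w ∈ Finset.univ.erase u, f w :=
                  Finset.sum_le_sum_of_subset hsub
          omega
        obtain ⟨v, hvT, hv0⟩ := hv
        have hvT' : v ≠ u ∧ ¬ G.Adj u v := by
          simp only [hT, Finset.mem_compl, Finset.mem_insert, SimpleGraph.mem_neighborFinset] at hvT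
          push_neg at hvT
          exact hvT
        have h2v : 2 ≤ ∑ w ∈ Finset.univ.filter (fun w => G.Adj v w), f w := by
          refine le_trans (hf2 v hv0) (le_of_eq ?_)
          exact Finset.sum_congr (by ext w; simp) (fun _ _ => rfl)
        have hsub2 : Finset.univ.filter (fun w => G.Adj v w) ⊆ Finset.univ.erase u := by
          intro w hw
          simp only [Finset.mem_filter] at hw
          simp only [Finset.mem_erase, Finset.mem_univ, and_true]
          rintro rfl
          exact hvT'.2 hw.2.symm
        have : ∑ w ∈ Finset.univ.filter (fun w => G.Adj v w), f w ≤ 1 :=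
          le_trans (Finset.sum_le_sum_of_subset hsub2) hrest
        omega
      · push_neg at hex
        have h1 : ∀ v, f v ≤ 1 := fun v => by
          have := hf1 v; have := hex v; omega
        set W := Finset.univ.filter (fun v => f v ≠ 0) with hW
        have hWval : ∀ v ∈ W, f v = 1 := by
          intro v hv
          simp only [hW, Finset.mem_filter] at hv
          have := h1 v; omega
        have hWcard : W.card = ∑ v, f v := by
          calc W.card = ∑ v ∈ W, 1 := by simp
            _ = ∑ v ∈ W, f v := Finset.sum_congr rfl (fun v hv => (hWval v hv).symm)
            _ = ∑ v, f v := Finset.sum_filter_ne_zero Finset.univ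
        have hWdom : ∀ v, v ∉ W → 2 ≤ (W.filter (fun u => G.Adj u v)).card := by
          intro v hvW
          have hv0 : f v = 0 := by
            by_contra h
            exact hvW (by simp [hW, h])
          have h2v : 2 ≤ ∑ w ∈ Finset.univ.filter (fun w => G.Adj v w), f w := by
            refine le_trans (hf2 v hv0) (le_of_eq ?_)
            exact Finset.sum_congr (by ext w; simp) (fun _ _ => rfl)
          have hkey : ∑ w ∈ Finset.univ.filter (fun w => G.Adj v w), f w ≤
              (W.filter (fun u => G.Adj u v)).card := by
            calc ∑ w ∈ Finset.univ.filter (fun w => G.Adj v w), f w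
                = ∑ w ∈ (Finset.univ.filter (fun w => G.Adj v w)).filter (fun w => f w ≠ 0), f w :=
                  (Finset.sum_filter_ne_zero _).symm
              _ ≤ ∑ w ∈ (Finset.univ.filter (fun w => G.Adj v w)).filter (fun w => f w ≠ 0), 1 :=
                  Finset.sum_le_sum (fun w _ => h1 w)
              _ = ((Finset.univ.filter (fun w => G.Adj v w)).filter (fun w => f w ≠ 0)).card := by
                  simp
              _ ≤ (W.filter (fun u => G.Adj u v)).card := by
                  apply Finset.card_le_card
                  intro w hw
                  simp only [Finset.mem_filter, Finset.mem_univ, true_and] at hw ⊢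
                  exact ⟨by simp [hW, hw.2], hw.1.symm⟩
          omega
        have h2le : twoDomNum G ≤ W.card := by
          apply Nat.sInf_le
          refine ⟨W, rfl, fun v hv => ?_⟩
          refine le_trans (hWdom v hv) (le_of_eq ?_)
          congr 1
          ext w
          simp [Finset.mem_filter]
        omega
  omega
end

section
/- If G is a graph with Δ(G) ≤ n−3 and γ_2(G) = 4, then γ_{R2}(G) = 4. -/
theorem roman2_eq_four_of_twoDomNum {V : Type*} [Fintype V] (G : SimpleGraph V)
    [DecidableRel G.Adj] (hΔ : G.maxDegree + 3 ≤ Fintype.card V)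
    (h2 : twoDomNum G = 4) :
    roman2 G = 4 := by
  have e2 : twoDomNum G = sInf {k | ∃ S : Finset V, S.card = k ∧
      ∀ v, v ∉ S → 2 ≤ (S.filter (fun u => G.Adj u v)).card} := by
    unfold twoDomNum; congr!
  have e1 : roman2 G = sInf {w | ∃ f : V → ℕ, (∀ v, f v ≤ 2) ∧
      (∀ v, f v = 0 → 2 ≤ ∑ u ∈ Finset.univ.filter (fun u => G.Adj v u), f u) ∧
      w = ∑ v, f v} := by
    unfold roman2; congr!
  rw [e2] at h2
  rw [e1]
  clear e1 e2
  haveI : DecidableEq V := Classical.decEq V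
  -- Extract a 2-dominating set of size 4
  have hne2 : {k | ∃ S : Finset V, S.card = k ∧
      ∀ v, v ∉ S → 2 ≤ (S.filter (fun u => G.Adj u v)).card}.Nonempty := by
    by_contra h
    rw [Set.not_nonempty_iff_eq_empty] at h
    rw [h, Nat.sInf_empty] at h2
    omega
  have hmem := Nat.sInf_mem hne2
  rw [h2] at hmem
  obtain ⟨S, hScard, hSdom⟩ := hmem
  -- The indicator function of S
  set f : V → ℕ := fun v => if v ∈ S then 1 else 0 with hf
  have hkey : ∀ v : V, ∑ u ∈ Finset.univ.filter (fun u => G.Adj v u), f u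
      = (S.filter (fun u => G.Adj u v)).card := by
    intro v
    rw [hf]
    rw [Finset.sum_ite_mem]
    rw [Finset.sum_const, smul_eq_mul, mul_one]
    congr 1
    ext u
    simp [G.adj_comm, and_comm]
  have hfmem : (4 : ℕ) ∈ {w | ∃ f : V → ℕ, (∀ v, f v ≤ 2) ∧
      (∀ v, f v = 0 → 2 ≤ ∑ u ∈ Finset.univ.filter (fun u => G.Adj v u), f u) ∧
      w = ∑ v, f v} := by
    refine ⟨f, ?_, ?_, ?_⟩
    · intro v; simp only [hf]; split_ifs <;> omega
    · intro v hv
      rw [hkey v]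
      apply hSdom
      intro hvS
      rw [hf] at hv
      simp [hvS] at hv
    · rw [hf]
      rw [Finset.sum_ite_mem, Finset.univ_inter, Finset.sum_const, smul_eq_mul, mul_one, hScard]
  -- Lower bound: every member of the set is ≥ 4
  have hlb : ∀ w ∈ {w | ∃ f : V → ℕ, (∀ v, f v ≤ 2) ∧
      (∀ v, f v = 0 → 2 ≤ ∑ u ∈ Finset.univ.filter (fun u => G.Adj v u), f u) ∧
      w = ∑ v, f v}, 4 ≤ w := by
    rintro w ⟨g, hg2, hgcond, hw⟩
    by_contra hlt
    push_neg at hlt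
    have hsum3 : ∑ v, g v ≤ 3 := by omega
    by_cases hex : ∃ a, g a = 2
    · -- Case 1: some vertex has value 2
      obtain ⟨a, ha⟩ := hex
      set T : Finset V := Finset.univ.filter (fun v => g v ≠ 0) with hT
      have haT : a ∈ T := by simp [hT]; omega
      have hTsum : ∑ v ∈ T, g v = ∑ v, g v := by
        rw [hT]; exact Finset.sum_filter_ne_zero Finset.univ
      have herase := (Finset.add_sum_erase T g haT).symm
      have hones : (T.erase a).card ≤ ∑ v ∈ T.erase a, g v := by
        calc (T.erase a).card = ∑ _v ∈ T.erase a, 1 := by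
              rw [Finset.sum_const, smul_eq_mul, mul_one]
          _ ≤ ∑ v ∈ T.erase a, g v := by
              apply Finset.sum_le_sum
              intro x hx
              have : x ∈ T := Finset.mem_of_mem_erase hx
              simp [hT] at this
              omega
      have hcardT : T.card ≤ 2 := by
        have hce : (T.erase a).card = T.card - 1 := Finset.card_erase_of_mem haT
        have hpos : 1 ≤ T.card := Finset.card_pos.mpr ⟨a, haT⟩
        omega
      have hadj : ∀ v, v ∉ T → G.Adj a v := by
        intro v hv
        by_contra hnadj
        have hg0 : g v = 0 := by simpa [hT] using hv
        have h2v := hgcond v hg0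
        have hsub : (Finset.univ.filter (fun u => G.Adj v u)).filter (fun u => g u ≠ 0)
            ⊆ T.erase a := by
          intro u hu
          simp only [Finset.mem_filter, Finset.mem_univ, true_and] at hu
          rw [Finset.mem_erase]
          refine ⟨?_, by simp [hT]; exact hu.2⟩
          rintro rfl
          exact hnadj (G.adj_symm hu.1)
        have heq : ∑ u ∈ (Finset.univ.filter (fun u => G.Adj v u)).filter (fun u => g u ≠ 0), g u
            = ∑ u ∈ Finset.univ.filter (fun u => G.Adj v u), g u :=
          Finset.sum_filter_ne_zero _
        have hle : ∑ u ∈ (Finset.univ.filter (fun u => G.Adj v u)).filter (fun u => g u ≠ 0), g u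
            ≤ ∑ u ∈ T.erase a, g u := Finset.sum_le_sum_of_subset hsub
        omega
      have hsubn : Finset.univ \ T ⊆ G.neighborFinset a := by
        intro v hv
        rw [SimpleGraph.mem_neighborFinset]
        exact hadj v (by simpa using (Finset.mem_sdiff.mp hv).2)
      have hdeg : Fintype.card V - T.card ≤ G.degree a := by
        calc Fintype.card V - T.card = (Finset.univ \ T).card := by
              rw [Finset.card_sdiff_of_subset (Finset.subset_univ T), Finset.card_univ]
          _ ≤ (G.neighborFinset a).card := Finset.card_le_card hsubn
          _ = G.degree a := rfl
      have hmd := G.degree_le_maxDegree a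
      omega
    · -- Case 2: all values ≤ 1
      push_neg at hex
      have hg1 : ∀ v, g v ≤ 1 := by intro v; have := hg2 v; have := hex v; omega
      set S' : Finset V := Finset.univ.filter (fun v => g v ≠ 0) with hS'
      have hcard : S'.card = ∑ v, g v := by
        rw [← Finset.sum_filter_ne_zero Finset.univ, ← hS']
        calc S'.card = ∑ _v ∈ S', 1 := by rw [Finset.sum_const, smul_eq_mul, mul_one]
          _ = ∑ v ∈ S', g v := by
              apply Finset.sum_congr rfl
              intro x hx
              simp [hS'] at hx
              have := hg1 x
              omega
      have hdom : ∀ v, v ∉ S' → 2 ≤ (S'.filter (fun u => G.Adj u v)).card := by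
        intro v hv
        have hg0 : g v = 0 := by simpa [hS'] using hv
        have h2v := hgcond v hg0
        have heq : (Finset.univ.filter (fun u => G.Adj v u)).filter (fun u => g u ≠ 0)
            = S'.filter (fun u => G.Adj u v) := by
          ext u
          simp only [Finset.mem_filter, Finset.mem_univ, true_and, hS']
          rw [G.adj_comm]
          tauto
        have hrw : ∑ u ∈ Finset.univ.filter (fun u => G.Adj v u), g u
            = ∑ u ∈ S'.filter (fun u => G.Adj u v), g u := by
          rw [← Finset.sum_filter_ne_zero (Finset.univ.filter (fun u => G.Adj v u)), heq]
        have hle : ∑ u ∈ S'.filter (fun u => G.Adj u v), g u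
            ≤ (S'.filter (fun u => G.Adj u v)).card := by
          calc ∑ u ∈ S'.filter (fun u => G.Adj u v), g u
              ≤ ∑ _u ∈ S'.filter (fun u => G.Adj u v), 1 :=
                Finset.sum_le_sum (fun x _ => hg1 x)
            _ = (S'.filter (fun u => G.Adj u v)).card := by
                rw [Finset.sum_const, smul_eq_mul, mul_one]
        omega
      have hle3 : sInf {k | ∃ S : Finset V, S.card = k ∧
          ∀ v, v ∉ S → 2 ≤ (S.filter (fun u => G.Adj u v)).card} ≤ S'.card :=
        Nat.sInf_le ⟨S', rfl, hdom⟩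
      omega
  -- Conclude
  exact le_antisymm (Nat.sInf_le hfmem)
    (hlb _ (Nat.sInf_mem (Set.nonempty_of_mem hfmem)))
end

section
/- A connected graph G on n vertices satisfies γ_{R2}(G) = n if and only if G = K_1 or G = K_2. -/
private lemma path_aux {V : Type*} {G : SimpleGraph V} {a b : V} (p : G.Walk a b)
    (hp : p.IsPath) (hab : a ≠ b) :
    G.Adj a b ∨ ∃ v u w : V, u ≠ w ∧ G.Adj v u ∧ G.Adj v w := by
  match p, hp with
  | .nil, _ => exact absurd rfl hab
  | .cons h .nil, _ => exact Or.inl h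
  | .cons (v := x) h (.cons (v := y) h' q'), hp =>
    right
    refine ⟨x, a, y, ?_, h.symm, h'⟩
    have h1 := ((SimpleGraph.Walk.cons_isPath_iff _ _).mp hp).2
    simp [SimpleGraph.Walk.support_cons] at h1
    intro hay
    exact h1.2 (hay ▸ q'.start_mem_support)

private lemma exists_two_nbrs {V : Type*} [Fintype V] {G : SimpleGraph V}
    (hconn : G.Connected) (h3 : 3 ≤ Fintype.card V) :
    ∃ v u w : V, u ≠ w ∧ G.Adj v u ∧ G.Adj v w := by
  classical
  have : Nonempty V := Fintype.card_pos_iff.mp (by omega)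
  obtain ⟨a⟩ := this
  obtain ⟨b, hba⟩ := Fintype.exists_ne_of_one_lt_card (by omega) a
  have hsub : ¬ (Finset.univ : Finset V) ⊆ {a, b} := by
    intro hsub
    have := Finset.card_le_card hsub
    have h2 : ({a, b} : Finset V).card ≤ 2 := Finset.card_insert_le _ _ |>.trans (by simp)
    simp [Finset.card_univ] at this
    omega
  obtain ⟨c, _, hc⟩ := Finset.not_subset.mp hsub
  simp at hc
  obtain ⟨p⟩ := hconn.preconnected a b
  rcases path_aux p.toPath.1 p.toPath.2 (Ne.symm hba) with hab | h
  · obtain ⟨q⟩ := hconn.preconnected a c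
    rcases path_aux q.toPath.1 q.toPath.2 (Ne.symm hc.1) with hac | h
    · exact ⟨a, b, c, fun hbc => hc.2 hbc.symm, hab, hac⟩
    · exact h
  · exact h

private lemma card_two_aux {V : Type*} [Fintype V] (h2 : Fintype.card V = 2)
    {a b c : V} (hab : a ≠ b) (hac : a ≠ c) : b = c := by
  classical
  by_contra hbc
  have : 3 ≤ Fintype.card V := by
    have : ({a, b, c} : Finset V).card = 3 := by
      rw [Finset.card_insert_of_notMem (by simp [hab, hac]),
        Finset.card_insert_of_notMem (by simp [hbc]), Finset.card_singleton]
    calc 3 = ({a, b, c} : Finset V).card := this.symm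
    _ ≤ Fintype.card V := by rw [← Finset.card_univ]; exact Finset.card_le_card (Finset.subset_univ _)
  omega

theorem roman2_eq_card_iff {V : Type*} [Fintype V] (G : SimpleGraph V)
    (hconn : G.Connected) :
    roman2 G = Fintype.card V ↔
      Nonempty (G ≃g (⊤ : SimpleGraph (Fin 1))) ∨
      Nonempty (G ≃g (⊤ : SimpleGraph (Fin 2))) := by
  classical
  have hne : Nonempty V := hconn.nonempty
  have hpos : 1 ≤ Fintype.card V := Fintype.card_pos
  set S : Set ℕ := {w | ∃ f : V → ℕ, (∀ v, f v ≤ 2) ∧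
    (∀ v, f v = 0 → 2 ≤ ∑ u ∈ Finset.univ.filter (fun u => G.Adj v u), f u) ∧
    w = ∑ v, f v} with hS
  have hSdef : roman2 G = sInf S := rfl
  have hcardmem : Fintype.card V ∈ S := by
    refine ⟨fun _ => 1, fun v => by norm_num, fun v h => by simp at h, by simp⟩
  constructor
  · intro h
    rcases lt_or_ge (Fintype.card V) 3 with hlt | hge
    · interval_cases hcv : Fintype.card V
      · left
        have hsub : Subsingleton V := Fintype.card_le_one_iff_subsingleton.mp (by omega)
        refine ⟨⟨Fintype.equivFinOfCardEq hcv, ?_⟩⟩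
        intro u v
        have huv : u = v := Subsingleton.elim u v
        subst huv
        simp
      · right
        have e := Fintype.equivFinOfCardEq hcv
        refine ⟨⟨e, ?_⟩⟩
        intro u v
        simp only [SimpleGraph.top_adj, ne_eq, EmbeddingLike.apply_eq_iff_eq]
        constructor
        · intro huv
          obtain ⟨p⟩ := hconn.preconnected u v
          cases p with
          | nil => exact absurd rfl huv
          | @cons _ x _ hux q =>
            have : x = v := card_two_aux hcv hux.ne huv
            exact this ▸ hux
        · exact fun hadj => hadj.ne
    · exfalso
      obtain ⟨v, u, w, huw, hvu, hvw⟩ := exists_two_nbrs hconn hge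
      have hmem : Fintype.card V - 1 ∈ S := by
        refine ⟨fun x => if x = v then 0 else 1, fun x => by dsimp; split <;> omega, ?_, ?_⟩
        · intro x hx
          have hxv : x = v := by by_contra hxv; simp [hxv] at hx
          subst hxv
          have hsub : ({u, w} : Finset V) ⊆ Finset.univ.filter (fun y => G.Adj x y) := by
            intro z hz
            simp at hz
            rcases hz with rfl | rfl <;> simp [hvu, hvw]
          calc (2 : ℕ) = ∑ y ∈ ({u, w} : Finset V), (if y = x then 0 else 1) := by
                rw [Finset.sum_pair huw]
                simp [hvu.ne', hvw.ne']
          _ ≤ _ := Finset.sum_le_sum_of_subset hsub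
        · have hsum : ∑ x : V, (if x = v then 0 else 1) = (Finset.univ.filter (fun x => ¬ x = v)).card := by
            rw [Finset.sum_ite, Finset.sum_const, Finset.sum_const]; simp
          rw [hsum]
          have : (Finset.univ.filter (fun x => ¬ x = v)) = Finset.univ.erase v := by
            ext y; simp [eq_comm, and_comm]
          rw [this, Finset.card_erase_of_mem (Finset.mem_univ v), Finset.card_univ]
      have hle : roman2 G ≤ Fintype.card V - 1 := Nat.sInf_le hmem
      omega
  · intro h
    have hcard : Fintype.card V ≤ 2 := by
      rcases h with ⟨⟨e⟩⟩ | ⟨⟨e⟩⟩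
      · simp [Fintype.card_congr e.toEquiv]
      · simp [Fintype.card_congr e.toEquiv]
    have hlb : ∀ m ∈ S, Fintype.card V ≤ m := by
      rintro m ⟨f, hf2, hf0, rfl⟩
      by_contra hlt
      push_neg at hlt
      have hm1 : ∑ v, f v ≤ 1 := by omega
      have hex : ∃ v, f v = 0 := by
        by_contra hall
        push_neg at hall
        have : Fintype.card V ≤ ∑ v, f v := by
          have := Finset.card_nsmul_le_sum Finset.univ f 1
            (fun v _ => Nat.one_le_iff_ne_zero.mpr (hall v))
          simpa [Finset.card_univ] using this
        omega
      obtain ⟨v, hv⟩ := hex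
      have := hf0 v hv
      have : (∑ u ∈ Finset.univ.filter (fun u => G.Adj v u), f u) ≤ ∑ u, f u :=
        Finset.sum_le_sum_of_subset (Finset.filter_subset _ _)
      omega
    exact le_antisymm (Nat.sInf_le hcardmem) (le_csInf ⟨_, hcardmem⟩ hlb)
end

section
/- A connected graph G on n vertices satisfies γ_{R2}(G) = n−1 if and only if G is isomorphic to C_3, P_3, or P_4. -/
/-!
Giving weight `2` to a vertex `v`, `0` to its neighbours and `1` to every other vertex shows
`γ_{R2}(G) ≤ n + 1 - deg v`, so `γ_{R2}(G) = n - 1` forces maximum degree at most `2`; and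
`γ_{R2}(G) ≥ min 2 n` forces `n ≥ 3`. Giving weight `0` to a set `S` each of whose vertices has
two neighbours outside `S`, and `1` elsewhere, shows `γ_{R2}(G) ≤ n - |S|`. In a connected graph
of maximum degree `2` with at least four vertices such a pair `S` exists unless the graph is
`P_4`. The remaining graphs `C_3`, `P_3`, `P_4` are checked directly.
-/

open Finset

namespace SimpleGraph

variable {V W : Type*} {G : SimpleGraph V} {H : SimpleGraph W}

theorem Preconnected.exists_adj_of_mem_of_notMem (hG : G.Preconnected) {S : Set V} {u v : V}
    (hu : u ∈ S) (hv : v ∉ S) : ∃ x ∈ S, ∃ y ∉ S, G.Adj x y := by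
  obtain ⟨p⟩ := hG u v
  obtain ⟨d, -, hd₁, hd₂⟩ := p.exists_boundary_dart S hu hv
  exact ⟨_, hd₁, _, hd₂, d.adj⟩

variable [Fintype V] [Fintype W]

theorem Preconnected.exists_adj_of_card_lt (hG : G.Preconnected) {S : Finset V} {u : V}
    (hu : u ∈ S) (hS : #S < Fintype.card V) : ∃ x ∈ S, ∃ y ∉ S, G.Adj x y := by
  obtain ⟨v, -, hv⟩ := exists_mem_notMem_of_card_lt_card (t := univ) (by simpa using hS)
  exact hG.exists_adj_of_mem_of_notMem (S := (S : Set V)) hu hv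

theorem eq_or_eq_of_degree_le_two [DecidableRel G.Adj] {v p q x : V} (hv : G.degree v ≤ 2)
    (hp : G.Adj v p) (hq : G.Adj v q) (hpq : p ≠ q) (hx : G.Adj v x) : x = p ∨ x = q := by
  by_contra! hne
  have : 2 < #(G.neighborFinset v) :=
    two_lt_card.2 ⟨p, by simpa, q, by simpa, x, by simpa, hpq, hne.1.symm, hne.2.symm⟩
  rw [card_neighborFinset_eq_degree] at this
  omega

theorem Connected.exists_adj_adj (hG : G.Connected) (hV : 3 ≤ Fintype.card V) :
    ∃ a b c, G.Adj a b ∧ G.Adj b c ∧ a ≠ c := by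
  classical
  obtain ⟨u⟩ := hG.nonempty
  obtain ⟨x, hx, y, hy, hxy⟩ := hG.preconnected.exists_adj_of_card_lt (mem_singleton_self u)
    (by simp; omega)
  rw [mem_singleton] at hx hy
  subst hx
  obtain ⟨z, hz, w, hw, hzw⟩ := hG.preconnected.exists_adj_of_card_lt (mem_insert_self x {y})
    (card_le_two.trans_lt (by omega))
  simp only [mem_insert, mem_singleton, not_or] at hz hw
  rcases hz with rfl | rfl
  · exact ⟨y, z, w, hxy.symm, hzw, Ne.symm hw.2⟩
  · exact ⟨x, z, w, hxy, hzw, Ne.symm hw.1⟩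

theorem Connected.exists_adj_adj_adj [DecidableRel G.Adj] (hG : G.Connected)
    (hdeg : ∀ v, G.degree v ≤ 2) (hV : 4 ≤ Fintype.card V) :
    ∃ a b c d, G.Adj a b ∧ G.Adj b c ∧ G.Adj c d ∧ a ≠ c ∧ a ≠ d ∧ b ≠ d := by
  classical
  obtain ⟨a, b, c, hab, hbc, hac⟩ := hG.exists_adj_adj (by omega)
  obtain ⟨x, hx, y, hy, hxy⟩ := hG.preconnected.exists_adj_of_card_lt (mem_insert_self a {b, c})
    (card_le_three.trans_lt (by omega))
  simp only [mem_insert, mem_singleton, not_or] at hx hy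
  obtain ⟨hya, hyb, hyc⟩ := hy
  rcases hx with rfl | rfl | rfl
  · exact ⟨y, x, b, c, hxy.symm, hab, hbc, hyb, hyc, hac⟩
  · have := eq_or_eq_of_degree_le_two (hdeg x) hab.symm hbc hac hxy
    tauto
  · exact ⟨a, b, x, y, hab, hbc, hxy, hac, Ne.symm hya, Ne.symm hyb⟩

theorem two_le_card_neighborFinset_sdiff [DecidableRel G.Adj] [DecidableEq V] {S : Finset V}
    {v p q : V} (hp : G.Adj v p) (hq : G.Adj v q) (hpq : p ≠ q) (hpS : p ∉ S) (hqS : q ∉ S) :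
    2 ≤ #(G.neighborFinset v \ S) :=
  one_lt_card.2 ⟨p, by simp [hp, hpS], q, by simp [hq, hqS], hpq⟩

theorem nonempty_iso_of_injective (φ : W → V) (hφ : Function.Injective φ)
    (hcard : Fintype.card W = Fintype.card V) (hadj : ∀ i j, G.Adj (φ i) (φ j) ↔ H.Adj i j) :
    Nonempty (G ≃g H) :=
  ⟨(⟨.ofBijective φ ((Fintype.bijective_iff_injective_and_card φ).2 ⟨hφ, hcard⟩),
    hadj _ _⟩ : H ≃g G).symm⟩

theorem nonempty_iso_cycleGraph_three_or_pathGraph_three (hV : Fintype.card V = 3) {a b c : V}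
    (hab : G.Adj a b) (hbc : G.Adj b c) (hac : a ≠ c) :
    Nonempty (G ≃g cycleGraph 3) ∨ Nonempty (G ≃g pathGraph 3) := by
  have hφ : Function.Injective ![a, b, c] := by
    intro i j
    fin_cases i <;> fin_cases j <;> simp [hab.ne, hbc.ne, hac, hab.ne.symm, hbc.ne.symm, hac.symm]
  by_cases hac' : G.Adj a c
  · refine .inl (nonempty_iso_of_injective _ hφ (by simp [hV]) fun i j => ?_)
    fin_cases i <;> fin_cases j <;> simp [cycleGraph_three_eq_top, hab, hbc, hac',
      G.adj_comm b a, G.adj_comm c b, G.adj_comm c a]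
  · refine .inr (nonempty_iso_of_injective _ hφ (by simp [hV]) fun i j => ?_)
    fin_cases i <;> fin_cases j <;> simp [pathGraph_adj, hab, hbc, hac', G.adj_comm b a,
      G.adj_comm c b, G.adj_comm c a]

instance (n : ℕ) : DecidableRel (pathGraph n).Adj :=
  fun _ _ => decidable_of_iff _ pathGraph_adj.symm

structure IsRoman2Dominating (G : SimpleGraph V) [DecidableRel G.Adj] (f : V → ℕ) : Prop where
  le_two : ∀ v, f v ≤ 2
  two_le_sum_of_eq_zero : ∀ v, f v = 0 → 2 ≤ ∑ u ∈ G.neighborFinset v, f u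

theorem IsRoman2Dominating.comp_iso [DecidableRel G.Adj] [DecidableRel H.Adj] {f : W → ℕ}
    (hf : H.IsRoman2Dominating f) (e : G ≃g H) : G.IsRoman2Dominating (f ∘ e) where
  le_two v := hf.le_two (e v)
  two_le_sum_of_eq_zero v hv :=
    (hf.two_le_sum_of_eq_zero (e v) hv).trans_eq <|
      (sum_equiv e.toEquiv (by simp [e.map_adj_iff]) (by simp)).symm

end SimpleGraph

open SimpleGraph

section Roman2

variable {V W : Type*} [Fintype V] [Fintype W] {G : SimpleGraph V} {H : SimpleGraph W}

theorem roman2_le_sum [DecidableRel G.Adj] {f : V → ℕ} (hf : G.IsRoman2Dominating f) :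
    roman2 G ≤ ∑ v, f v :=
  Nat.sInf_le ⟨f, hf.le_two, fun v hv => by
    convert hf.two_le_sum_of_eq_zero v hv using 2; ext; simp, rfl⟩

theorem exists_isRoman2Dominating_sum_eq_roman2 (G : SimpleGraph V) [DecidableRel G.Adj] :
    ∃ f, G.IsRoman2Dominating f ∧ ∑ v, f v = roman2 G := by
  obtain ⟨f, hle, hsum, heq⟩ : roman2 G ∈ _ :=
    Nat.sInf_mem ⟨_, fun _ => 1, fun _ => one_le_two, fun _ h => absurd h one_ne_zero, rfl⟩
  refine ⟨f, ⟨hle, fun v hv => ?_⟩, heq.symm⟩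
  convert hsum v hv using 2; ext; simp

theorem SimpleGraph.Iso.roman2_le (e : G ≃g H) : roman2 G ≤ roman2 H := by
  classical
  obtain ⟨f, hf, hsum⟩ := exists_isRoman2Dominating_sum_eq_roman2 H
  calc roman2 G ≤ ∑ v, f (e v) := roman2_le_sum (hf.comp_iso e)
    _ = roman2 H := (e.toEquiv.sum_comp f).trans hsum

theorem SimpleGraph.Iso.roman2_eq (e : G ≃g H) : roman2 G = roman2 H :=
  e.roman2_le.antisymm e.symm.roman2_le

theorem min_two_card_le_roman2 (G : SimpleGraph V) : min 2 (Fintype.card V) ≤ roman2 G := by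
  classical
  obtain ⟨f, hf, hsum⟩ := exists_isRoman2Dominating_sum_eq_roman2 G
  rw [← hsum]
  by_contra! hlt
  -- a vertex of weight `0` would need weight `2` on its neighbours, more than the total
  have hpos : ∀ v, 1 ≤ f v := by
    intro v
    by_contra! hv
    have h₁ := hf.two_le_sum_of_eq_zero v (by omega)
    have h₂ : ∑ u ∈ G.neighborFinset v, f u ≤ ∑ u, f u :=
      sum_le_sum_of_subset (subset_univ _)
    omega
  have : Fintype.card V ≤ ∑ v, f v := by
    simpa using card_nsmul_le_sum univ f 1 fun v _ => hpos v
  omega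

theorem roman2_add_degree_le [DecidableRel G.Adj] (v : V) :
    roman2 G + G.degree v ≤ Fintype.card V + 1 := by
  classical
  set f : V → ℕ := fun u => if u = v then 2 else if G.Adj v u then 0 else 1 with hf_def
  have hf : G.IsRoman2Dominating f := by
    refine ⟨fun u => by simp only [hf_def]; split_ifs <;> omega, fun u hu => ?_⟩
    have huv : G.Adj u v := by
      simp only [hf_def] at hu
      split_ifs at hu with h₁ h₂
      exact h₂.symm
    calc 2 = f v := by simp [hf_def]
      _ ≤ ∑ w ∈ G.neighborFinset u, f w :=
        single_le_sum (fun _ _ => Nat.zero_le _) ((G.mem_neighborFinset u v).2 huv)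
  have hpoint : ∀ u, f u + (if G.Adj v u then 1 else 0) = 1 + if u = v then 1 else 0 := by
    intro u
    by_cases huv : u = v
    · subst huv; simp [hf_def]
    · by_cases hadj : G.Adj v u <;> simp [hf_def, huv, hadj]
  have hsum : ∑ u, f u + G.degree v = Fintype.card V + 1 := by
    have := sum_congr rfl fun u (_ : u ∈ univ) => hpoint u
    rw [sum_add_distrib, sum_add_distrib, sum_boole, sum_ite_eq'] at this
    simpa [← card_neighborFinset_eq_degree, neighborFinset_eq_filter] using this
  have := roman2_le_sum hf
  omega

theorem roman2_add_card_le [DecidableRel G.Adj] [DecidableEq V] (S : Finset V)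
    (hS : ∀ v ∈ S, 2 ≤ #(G.neighborFinset v \ S)) : roman2 G + #S ≤ Fintype.card V := by
  set f : V → ℕ := fun u => if u ∈ S then 0 else 1 with hf_def
  have hf : G.IsRoman2Dominating f := by
    refine ⟨fun u => by simp only [hf_def]; split_ifs <;> omega, fun u hu => ?_⟩
    have huS : u ∈ S := by by_contra h; simp [hf_def, h] at hu
    simpa [hf_def, sum_ite, sdiff_eq_filter] using hS u huS
  have hsum : ∑ u, f u = #Sᶜ := by simp [hf_def, sum_ite, compl_eq_univ_sdiff, sdiff_eq_filter]
  have := roman2_le_sum hf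
  rw [hsum, card_compl] at this
  have := card_le_univ S
  omega

theorem roman2_add_two_le_card [DecidableRel G.Adj] [DecidableEq V] {b d : V} (hbd : b ≠ d)
    (hb : 2 ≤ #(G.neighborFinset b \ {b, d})) (hd : 2 ≤ #(G.neighborFinset d \ {b, d})) :
    roman2 G + 2 ≤ Fintype.card V := by
  simpa [card_pair hbd] using roman2_add_card_le (G := G) {b, d} (by simp [hb, hd])

theorem SimpleGraph.Connected.card_le_four_of_adj_adj_adj [DecidableRel G.Adj]
    (hG : G.Connected) (hdeg : ∀ v, G.degree v ≤ 2) (hγ : Fintype.card V < roman2 G + 2)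
    {a b c d : V} (hab : G.Adj a b) (hbc : G.Adj b c) (hcd : G.Adj c d) (hac : a ≠ c)
    (had : a ≠ d) (hbd : b ≠ d) : Fintype.card V ≤ 4 := by
  classical
  by_contra! hV
  obtain ⟨x, hx, y, hy, hxy⟩ := hG.preconnected.exists_adj_of_card_lt
    (mem_insert_self a {b, c, d}) (card_le_four.trans_lt hV)
  simp only [mem_insert, mem_singleton, not_or] at hx hy
  obtain ⟨hya, hyb, hyc, hyd⟩ := hy
  rcases hx with rfl | rfl | rfl | rfl
  · have := roman2_add_two_le_card hac
      (two_le_card_neighborFinset_sdiff hab hxy (Ne.symm hyb) (by simp [hab.ne.symm, hbc.ne])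
        (by simp [hya, hyc]))
      (two_le_card_neighborFinset_sdiff hbc.symm hcd hbd (by simp [hab.ne.symm, hbc.ne])
        (by simp [hcd.ne.symm, had.symm]))
    omega
  · have := eq_or_eq_of_degree_le_two (hdeg x) hab.symm hbc hac hxy
    tauto
  · have := eq_or_eq_of_degree_le_two (hdeg x) hbc.symm hcd hbd hxy
    tauto
  · have := roman2_add_two_le_card hbd
      (two_le_card_neighborFinset_sdiff hab.symm hbc hac (by simp [hab.ne, had])
        (by simp [hbc.ne.symm, hcd.ne]))
      (two_le_card_neighborFinset_sdiff hcd.symm hxy (Ne.symm hyc) (by simp [hbc.ne.symm, hcd.ne])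
        (by simp [hyb, hyd]))
    omega

theorem nonempty_iso_pathGraph_four [DecidableRel G.Adj] (hV : Fintype.card V = 4)
    (hdeg : ∀ v, G.degree v ≤ 2) (hγ : Fintype.card V < roman2 G + 2) {a b c d : V}
    (hab : G.Adj a b) (hbc : G.Adj b c) (hcd : G.Adj c d) (hac : a ≠ c) (had : a ≠ d)
    (hbd : b ≠ d) : Nonempty (G ≃g pathGraph 4) := by
  classical
  have hac' : ¬G.Adj a c := fun h => by
    have := eq_or_eq_of_degree_le_two (hdeg c) hbc.symm hcd hbd h.symm
    simp [hab.ne, had] at this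
  have hbd' : ¬G.Adj b d := fun h => by
    have := eq_or_eq_of_degree_le_two (hdeg b) hab.symm hbc hac h
    simp [had.symm, hcd.ne.symm] at this
  -- on the 4-cycle, weight `1` on `a` and `c` is Roman `{2}`-dominating
  have had' : ¬G.Adj a d := fun h => by
    have := roman2_add_two_le_card hbd
      (two_le_card_neighborFinset_sdiff hab.symm hbc hac (by simp [hab.ne, had])
        (by simp [hbc.ne.symm, hcd.ne]))
      (two_le_card_neighborFinset_sdiff hcd.symm h.symm (Ne.symm hac)
        (by simp [hbc.ne.symm, hcd.ne]) (by simp [hab.ne, had]))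
    omega
  have hφ : Function.Injective ![a, b, c, d] := by
    intro i j
    fin_cases i <;> fin_cases j <;> simp [hab.ne, hbc.ne, hcd.ne, hac, had, hbd, hab.ne.symm,
      hbc.ne.symm, hcd.ne.symm, hac.symm, had.symm, hbd.symm]
  refine nonempty_iso_of_injective _ hφ (by simp [hV]) fun i j => ?_
  fin_cases i <;> fin_cases j <;> simp [pathGraph_adj, hab, hbc, hcd, hac', had', hbd',
    G.adj_comm b a, G.adj_comm c b, G.adj_comm d c, G.adj_comm c a, G.adj_comm d a, G.adj_comm d b]

theorem roman2_cycleGraph_three : roman2 (cycleGraph 3) = 2 := by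
  have := roman2_add_degree_le (G := cycleGraph 3) 0
  have := min_two_card_le_roman2 (cycleGraph 3)
  simp only [Fintype.card_fin, show (cycleGraph 3).degree 0 = 2 by decide] at *
  omega

theorem roman2_pathGraph_three : roman2 (pathGraph 3) = 2 := by
  have := roman2_add_degree_le (G := pathGraph 3) 1
  have := min_two_card_le_roman2 (pathGraph 3)
  simp only [Fintype.card_fin, show (pathGraph 3).degree 1 = 2 by decide] at *
  omega

theorem roman2_pathGraph_four : roman2 (pathGraph 4) = 3 := by
  have hup := roman2_add_degree_le (G := pathGraph 4) 1
  simp only [Fintype.card_fin, show (pathGraph 4).degree 1 = 2 by decide] at hup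
  obtain ⟨f, hf, hsum⟩ := exists_isRoman2Dominating_sum_eq_roman2 (pathGraph 4)
  have hcheck : ∀ g : Fin 4 → Fin 3,
      (∀ v, (g v : ℕ) = 0 → 2 ≤ ∑ u ∈ (pathGraph 4).neighborFinset v, (g u : ℕ)) →
      3 ≤ ∑ v, (g v : ℕ) := by
    decide
  have := hcheck (fun v => ⟨f v, Nat.lt_succ_of_le (hf.le_two v)⟩) hf.two_le_sum_of_eq_zero
  simp only at this
  omega

end Roman2

theorem roman2_eq_card_sub_one_iff {V : Type*} [Fintype V] (G : SimpleGraph V)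
    (hconn : G.Connected) :
    roman2 G + 1 = Fintype.card V ↔
      Nonempty (G ≃g SimpleGraph.cycleGraph 3) ∨
      Nonempty (G ≃g SimpleGraph.pathGraph 3) ∨
      Nonempty (G ≃g SimpleGraph.pathGraph 4) := by
  classical
  constructor
  · intro h
    have hdeg : ∀ v, G.degree v ≤ 2 := fun v => by
      have := roman2_add_degree_le (G := G) v
      omega
    have h3 : 3 ≤ Fintype.card V := by
      have := min_two_card_le_roman2 G
      omega
    rcases h3.eq_or_lt with h3 | h4
    · obtain ⟨a, b, c, hab, hbc, hac⟩ := hconn.exists_adj_adj h3.le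
      exact (nonempty_iso_cycleGraph_three_or_pathGraph_three h3.symm hab hbc hac).imp_right .inl
    · obtain ⟨a, b, c, d, hab, hbc, hcd, hac, had, hbd⟩ := hconn.exists_adj_adj_adj hdeg h4
      have := hconn.card_le_four_of_adj_adj_adj hdeg (by omega) hab hbc hcd hac had hbd
      exact .inr <| .inr <|
        nonempty_iso_pathGraph_four (by omega) hdeg (by omega) hab hbc hcd hac had hbd
  · rintro (⟨⟨e⟩⟩ | ⟨⟨e⟩⟩ | ⟨⟨e⟩⟩) <;> rw [e.roman2_eq, e.card_eq]
    · simp [roman2_cycleGraph_three]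
    · simp [roman2_pathGraph_three]
    · simp [roman2_pathGraph_four]
end

section
/- If a connected graph G on n vertices satisfies γ_{R2}(G) = n−2, then Δ(G) ≤ 3. -/
/-!
Putting weight 2 on a vertex `v`, 0 on its neighbours and 1 everywhere else gives a
Roman `{2}`-dominating function of weight `n + 1 - deg v`. Hence `n - 2 = γ_{R2}(G)`
forces `deg v ≤ 3` for every vertex.
-/

open Finset

namespace SimpleGraph

variable {V : Type*} [Fintype V] (G : SimpleGraph V) [DecidableRel G.Adj]

theorem roman2_le_sum {f : V → ℕ} (hf_le : ∀ v, f v ≤ 2)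
    (hf_dom : ∀ v, f v = 0 → 2 ≤ ∑ u ∈ univ.filter (G.Adj v ·), f u) :
    roman2 G ≤ ∑ v, f v :=
  Nat.sInf_le ⟨f, hf_le, fun v hv => by convert hf_dom v hv, rfl⟩

theorem roman2_add_degree_le_card_add_one (v : V) :
    roman2 G + G.degree v ≤ Fintype.card V + 1 := by
  classical
  let f : V → ℕ := fun u => if u = v then 2 else if G.Adj v u then 0 else 1
  have hf_le : ∀ u, f u ≤ 2 := fun u => by dsimp only [f]; split_ifs <;> omega
  have hf_dom : ∀ u, f u = 0 → 2 ≤ ∑ w ∈ univ.filter (G.Adj u ·), f w := by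
    intro u hu
    have hvu : G.Adj v u := by
      by_contra hvu
      dsimp only [f] at hu
      split_ifs at hu
    calc 2 = f v := by simp [f]
      _ ≤ _ := single_le_sum (fun _ _ => Nat.zero_le _) (by simpa using hvu.symm)
  have hpoint : ∀ u, f u + (if G.Adj v u then 1 else 0) = 1 + if u = v then 1 else 0 := by
    intro u
    by_cases huv : u = v
    · subst huv; simp [f]
    · by_cases hvu : G.Adj v u <;> simp [f, huv, hvu]
  have hweight : ∑ u, f u + G.degree v = Fintype.card V + 1 := by
    calc ∑ u, f u + G.degree v = ∑ u, (f u + if G.Adj v u then 1 else 0) := by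
          rw [sum_add_distrib, sum_boole, ← card_neighborFinset_eq_degree,
            neighborFinset_eq_filter, Nat.cast_id]
      _ = ∑ u, (1 + if u = v then 1 else 0) := sum_congr rfl fun u _ => hpoint u
      _ = Fintype.card V + 1 := by simp [sum_add_distrib]
  have := G.roman2_le_sum hf_le hf_dom
  omega

end SimpleGraph

theorem maxDegree_le_three_of_roman2_general {V : Type*} [Fintype V] (G : SimpleGraph V)
    [DecidableRel G.Adj]
    (h : roman2 G + 2 = Fintype.card V) :
    G.maxDegree ≤ 3 :=
  G.maxDegree_le_of_forall_degree_le 3 fun v => by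
    have := G.roman2_add_degree_le_card_add_one v
    omega

theorem maxDegree_le_three_of_roman2 {V : Type*} [Fintype V] (G : SimpleGraph V)
    [DecidableRel G.Adj] (hconn : G.Connected)
    (h : roman2 G + 2 = Fintype.card V) :
    G.maxDegree ≤ 3 :=
  maxDegree_le_three_of_roman2_general G h
end

section
/- If a connected graph G on n vertices satisfies γ_{R2}(G) = n−2, then every pair of non-adjacent vertices of degree 3 in G has exactly two common neighbors. -/
open Finset in
section
open Finset in
lemma roman2_le_of {V : Type*} [Fintype V] (G : SimpleGraph V) [DecidableRel G.Adj] (f : V → ℕ)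
    (h1 : ∀ v, f v ≤ 2)
    (h2 : ∀ v, f v = 0 → 2 ≤ ∑ u ∈ Finset.univ.filter (fun u => G.Adj v u), f u) :
    roman2 G ≤ ∑ v, f v := by
  apply Nat.sInf_le
  refine ⟨f, h1, ?_, rfl⟩
  intro v hv
  convert h2 v hv using 3

end

theorem common_neighbors_of_roman2 {V : Type*} [Fintype V] [DecidableEq V] (G : SimpleGraph V)
    [DecidableRel G.Adj] (hconn : G.Connected)
    (h : roman2 G + 2 = Fintype.card V) :
    ∀ u v : V, u ≠ v → ¬G.Adj u v → G.degree u = 3 → G.degree v = 3 →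
      (G.neighborFinset u ∩ G.neighborFinset v).card = 2 := by
  intro u v huv hadj hdu hdv
  have hNu : (G.neighborFinset u).card = 3 := by
    rw [G.card_neighborFinset_eq_degree]; exact hdu
  have hNv : (G.neighborFinset v).card = 3 := by
    rw [G.card_neighborFinset_eq_degree]; exact hdv
  set c := (G.neighborFinset u ∩ G.neighborFinset v).card with hc
  have hc3 : c ≤ 3 := hNu ▸ Finset.card_le_card Finset.inter_subset_left
  have huNu : u ∉ G.neighborFinset u := by simp
  have hvNu : v ∉ G.neighborFinset u := by
    simp only [SimpleGraph.mem_neighborFinset]; exact hadj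
  have huNv : u ∉ G.neighborFinset v := by
    simp only [SimpleGraph.mem_neighborFinset]
    exact fun hh => hadj hh.symm
  have hvNv : v ∉ G.neighborFinset v := by simp
  -- n ≥ 5
  have hn5 : 5 ≤ Fintype.card V := by
    have h5 : (insert u (insert v (G.neighborFinset u))).card = 5 := by
      rw [Finset.card_insert_of_notMem (by simp [huv, huNu]),
        Finset.card_insert_of_notMem hvNu, hNu]
    calc (5:ℕ) = _ := h5.symm
      _ ≤ _ := Finset.card_le_univ _
  -- Part 1 : 2 ≤ c
  have hge2 : 2 ≤ c := by
    by_contra hlt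
    push_neg at hlt
    set A : Finset V := {u, v} with hA
    set B := G.neighborFinset u ∪ G.neighborFinset v with hB
    set f : V → ℕ := fun w => if w = u ∨ w = v then 2 else if w ∈ B then 0 else 1 with hf
    have hfu : f u = 2 := by simp [hf]
    have hfv : f v = 2 := by simp [hf]
    have h1 : ∀ w, f w ≤ 2 := by
      intro w; simp only [hf]; split_ifs <;> omega
    have h2 : ∀ w, f w = 0 → 2 ≤ ∑ x ∈ Finset.univ.filter (fun x => G.Adj w x), f x := by
      intro w hw
      by_cases h1' : w = u ∨ w = v
      · simp [hf, h1'] at hw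
      · by_cases h2' : w ∈ B
        · rcases Finset.mem_union.mp h2' with hwu | hwv
          · have hu_mem : u ∈ Finset.univ.filter (fun x => G.Adj w x) := by
              simp only [Finset.mem_filter, Finset.mem_univ, true_and]
              exact ((SimpleGraph.mem_neighborFinset G u w).mp hwu).symm
            calc (2:ℕ) = f u := hfu.symm
              _ ≤ _ := Finset.single_le_sum (fun i _ => Nat.zero_le _) hu_mem
          · have hv_mem : v ∈ Finset.univ.filter (fun x => G.Adj w x) := by
              simp only [Finset.mem_filter, Finset.mem_univ, true_and]
              exact ((SimpleGraph.mem_neighborFinset G v w).mp hwv).symm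
            calc (2:ℕ) = f v := hfv.symm
              _ ≤ _ := Finset.single_le_sum (fun i _ => Nat.zero_le _) hv_mem
        · simp [hf, h1', h2'] at hw
    have hle := roman2_le_of G f h1 h2
    -- compute the weight
    have hBA : B ⊆ Aᶜ := by
      intro w hw
      simp only [hA, Finset.mem_compl, Finset.mem_insert, Finset.mem_singleton]
      rintro (rfl | rfl)
      · rcases Finset.mem_union.mp hw with h' | h'
        · exact huNu h'
        · exact huNv h'
      · rcases Finset.mem_union.mp hw with h' | h'
        · exact hvNu h'
        · exact hvNv h'
    have hsumA : ∑ w ∈ A, f w = 4 := by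
      rw [hA, Finset.sum_pair huv, hfu, hfv]
    have hsumAc : ∑ w ∈ Aᶜ, f w = (Aᶜ.filter (fun w => w ∉ B)).card := by
      rw [Finset.card_filter]
      refine Finset.sum_congr rfl fun w hw => ?_
      have hw' : ¬(w = u ∨ w = v) := by
        simpa [hA, Finset.mem_compl, Finset.mem_insert, not_or] using hw
      by_cases hwB : w ∈ B <;> simp [hf, hw', hwB]
    have htotal : ∑ w, f w = 4 + (Aᶜ.filter (fun w => w ∉ B)).card := by
      rw [← Finset.sum_add_sum_compl A f, hsumA, hsumAc]
    have hfiltB : Aᶜ.filter (fun w => w ∈ B) = B := by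
      apply Finset.Subset.antisymm
      · intro w hw; exact (Finset.mem_filter.mp hw).2
      · intro w hw; exact Finset.mem_filter.mpr ⟨hBA hw, hw⟩
    have hsplit : (Aᶜ.filter (fun w => w ∈ B)).card + (Aᶜ.filter (fun w => w ∉ B)).card
        = Aᶜ.card := Finset.card_filter_add_card_filter_not _
    have hAcard : A.card + Aᶜ.card = Fintype.card V := Finset.card_add_card_compl A
    have hAcard2 : A.card = 2 := by rw [hA, Finset.card_pair huv]
    have hBcard : B.card + c = 6 := by
      rw [hB, hc, Finset.card_union_add_card_inter, hNu, hNv]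
    rw [hfiltB] at hsplit
    rw [htotal] at hle
    omega
  -- Part 2 : c ≠ 3
  have hne3 : c ≠ 3 := by
    intro hc3'
    have hinter : G.neighborFinset u ∩ G.neighborFinset v = G.neighborFinset u :=
      Finset.eq_of_subset_of_card_le Finset.inter_subset_left (by omega)
    set g : V → ℕ := fun w => if w ∈ G.neighborFinset u then 0 else 1 with hg
    have h1 : ∀ w, g w ≤ 2 := by
      intro w; simp only [hg]; split_ifs <;> omega
    have h2 : ∀ w, g w = 0 → 2 ≤ ∑ x ∈ Finset.univ.filter (fun x => G.Adj w x), g x := by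
      intro w hw
      have hwB : w ∈ G.neighborFinset u := by
        by_contra hwB
        simp only [hg] at hw
        rw [if_neg hwB] at hw
        exact absurd hw one_ne_zero
      have hwv : w ∈ G.neighborFinset v := by
        have h' : w ∈ G.neighborFinset u ∩ G.neighborFinset v := hinter.symm ▸ hwB
        exact (Finset.mem_inter.mp h').2
      have hadju : G.Adj w u := ((SimpleGraph.mem_neighborFinset G u w).mp hwB).symm
      have hadjv : G.Adj w v := ((SimpleGraph.mem_neighborFinset G v w).mp hwv).symm
      have hsub : ({u, v} : Finset V) ⊆ Finset.univ.filter (fun x => G.Adj w x) := by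
        intro x hx
        simp only [Finset.mem_insert, Finset.mem_singleton] at hx
        simp only [Finset.mem_filter, Finset.mem_univ, true_and]
        rcases hx with rfl | rfl
        · exact hadju
        · exact hadjv
      have hpair : ∑ x ∈ ({u, v} : Finset V), g x = 2 := by
        rw [Finset.sum_pair huv]
        simp only [hg]
        rw [if_neg huNu, if_neg hvNu]
      calc (2:ℕ) = _ := hpair.symm
        _ ≤ _ := Finset.sum_le_sum_of_subset hsub
    have hle := roman2_le_of G g h1 h2
    have hsum : ∑ w, g w = (Finset.univ.filter (fun w => w ∉ G.neighborFinset u)).card := by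
      rw [Finset.card_filter]
      refine Finset.sum_congr rfl fun w _ => ?_
      simp only [hg]
      by_cases hwB : w ∈ G.neighborFinset u
      · rw [if_pos hwB, if_neg (not_not_intro hwB)]
      · rw [if_neg hwB, if_pos hwB]
    have hsplit : (Finset.univ.filter (fun w => w ∈ G.neighborFinset u)).card +
        (Finset.univ.filter (fun w => w ∉ G.neighborFinset u)).card = Fintype.card V := by
      rw [Finset.card_filter_add_card_filter_not, Finset.card_univ]
    have hfilt : Finset.univ.filter (fun w => w ∈ G.neighborFinset u) = G.neighborFinset u := by
      ext w; simp
    rw [hfilt, hNu] at hsplit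
    rw [hsum] at hle
    omega

  omega
end

section
/- For positive integers n ≤ m, the Cartesian product of complete graphs satisfies γ_{R2}(K_n □ K_m) = min{m, 2n}. -/
open Finset in
private lemma sum_row_aux (n m : ℕ) (f : Fin n × Fin m → ℕ) (i : Fin n) :
    ∑ u ∈ univ.filter (fun u : Fin n × Fin m => u.1 = i), f u = ∑ j, f (i, j) := by
  have h : univ.filter (fun u : Fin n × Fin m => u.1 = i) = {i} ×ˢ univ := by
    ext u
    simp only [mem_filter, mem_univ, true_and, Finset.mem_product, Finset.mem_singleton]
    constructor
    · intro h; exact ⟨h, trivial⟩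
    · intro h; exact h.1
  rw [h, Finset.sum_product]
  simp

open Finset in
private lemma sum_col_aux (n m : ℕ) (f : Fin n × Fin m → ℕ) (j : Fin m) :
    ∑ u ∈ univ.filter (fun u : Fin n × Fin m => u.2 = j), f u = ∑ i, f (i, j) := by
  have h : univ.filter (fun u : Fin n × Fin m => u.2 = j) = univ ×ˢ {j} := by
    ext u
    simp only [mem_filter, mem_univ, true_and, Finset.mem_product, Finset.mem_singleton,
      and_true]
  rw [h, Finset.sum_product]
  simp

open Finset in
theorem roman2_boxProd_complete (n m : ℕ) (hn : 1 ≤ n) (hnm : n ≤ m) :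
    roman2 ((⊤ : SimpleGraph (Fin n)).boxProd (⊤ : SimpleGraph (Fin m))) =
      min m (2 * n) := by
  classical
  set G := (⊤ : SimpleGraph (Fin n)).boxProd (⊤ : SimpleGraph (Fin m)) with hG
  have adj : ∀ x y : Fin n × Fin m,
      G.Adj x y ↔ (x.1 ≠ y.1 ∧ x.2 = y.2) ∨ (x.2 ≠ y.2 ∧ x.1 = y.1) := by
    intro x y
    simp [hG, SimpleGraph.boxProd_adj]
  set S : Set ℕ := {w | ∃ f : Fin n × Fin m → ℕ, (∀ v, f v ≤ 2) ∧
    (∀ v, f v = 0 → 2 ≤ ∑ u ∈ Finset.univ.filter (fun u => G.Adj v u), f u) ∧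
    w = ∑ v, f v} with hS
  have hmem : min m (2 * n) ∈ S := by
    by_cases hcase : m ≤ 2 * n
    · -- witness of total weight m
      have hmin : min m (2 * n) = m := min_eq_left hcase
      set g : Fin m → Fin n := fun j => ⟨(j : ℕ) % n, Nat.mod_lt _ hn⟩ with hg
      refine ⟨fun p => if p.1 = g p.2 then 1 else 0, ?_, ?_, ?_⟩
      · intro v; dsimp only; split <;> omega
      · rintro ⟨i, j⟩ hv
        have hij : i ≠ g j := by by_contra h; simp [h] at hv
        set a : Fin n × Fin m := (i, Fin.castLE hnm i) with haa
        set b : Fin n × Fin m := (g j, j) with hbb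
        have hgi : g (Fin.castLE hnm i) = i := by
          apply Fin.ext
          simp [hg, Nat.mod_eq_of_lt i.isLt]
        have hab : a ≠ b := fun h => hij (show i = g j from congrArg Prod.fst h)
        have hja : j ≠ Fin.castLE hnm i := by
          intro h
          exact hij (by rw [h, hgi])
        have ha : a ∈ univ.filter (fun u => G.Adj (i, j) u) := by
          simp only [mem_filter, mem_univ, true_and]
          rw [adj]
          exact Or.inr ⟨hja, rfl⟩
        have hb : b ∈ univ.filter (fun u => G.Adj (i, j) u) := by
          simp only [mem_filter, mem_univ, true_and]
          rw [adj]
          exact Or.inl ⟨hij, rfl⟩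
        have hsub : ({a, b} : Finset (Fin n × Fin m)) ⊆
            univ.filter (fun u => G.Adj (i, j) u) := by
          intro u hu
          rcases Finset.mem_insert.mp hu with h | h
          · exact h ▸ ha
          · exact (Finset.mem_singleton.mp h) ▸ hb
        calc 2 = ∑ u ∈ ({a, b} : Finset (Fin n × Fin m)),
              (if u.1 = g u.2 then 1 else 0) := by
                rw [Finset.sum_pair hab]
                simp [haa, hbb, hgi]
          _ ≤ _ := Finset.sum_le_sum_of_subset hsub
      · rw [hmin, Fintype.sum_prod_type_right]
        simp
    · -- witness of total weight 2n
      have hmin : min m (2 * n) = 2 * n := min_eq_right (le_of_not_ge hcase)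
      refine ⟨fun p => if p.2 = Fin.castLE hnm p.1 then 2 else 0, ?_, ?_, ?_⟩
      · intro v; dsimp only; split <;> omega
      · rintro ⟨i, j⟩ hv
        have hij : j ≠ Fin.castLE hnm i := by by_contra h; simp [h] at hv
        set a : Fin n × Fin m := (i, Fin.castLE hnm i) with haa
        have ha : a ∈ univ.filter (fun u => G.Adj (i, j) u) := by
          simp only [mem_filter, mem_univ, true_and]
          rw [adj]
          exact Or.inr ⟨hij, rfl⟩
        have := Finset.single_le_sum
          (f := fun u : Fin n × Fin m => if u.2 = Fin.castLE hnm u.1 then 2 else 0)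
          (fun u _ => Nat.zero_le _) ha
        simpa [haa] using this
      · rw [hmin, Fintype.sum_prod_type]
        simp [mul_comm]
  have hlb : ∀ w ∈ S, min m (2 * n) ≤ w := by
    rintro w ⟨f, h1, h2, rfl⟩
    by_cases hcols : ∀ j : Fin m, ∃ i : Fin n, f (i, j) ≠ 0
    · -- every column has positive weight
      refine le_trans (min_le_left _ _) ?_
      rw [Fintype.sum_prod_type_right]
      calc (m : ℕ) = ∑ _j : Fin m, 1 := by simp
        _ ≤ ∑ j : Fin m, ∑ i : Fin n, f (i, j) := by
            refine Finset.sum_le_sum fun j _ => ?_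
            obtain ⟨i, hi⟩ := hcols j
            calc 1 ≤ f (i, j) := Nat.one_le_iff_ne_zero.mpr hi
              _ ≤ _ := Finset.single_le_sum (f := fun i => f (i, j))
                  (fun _ _ => Nat.zero_le _) (mem_univ i)
    · -- some column is all zero; then every row sum is ≥ 2
      push_neg at hcols
      obtain ⟨j0, hj0⟩ := hcols
      have hrow : ∀ i : Fin n, 2 ≤ ∑ j, f (i, j) := by
        intro i
        refine le_trans (h2 (i, j0) (hj0 i)) ?_
        have hsub : univ.filter (fun u => G.Adj (i, j0) u) ⊆
            univ.filter (fun u : Fin n × Fin m => u.1 = i) ∪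
            univ.filter (fun u : Fin n × Fin m => u.2 = j0) := by
          intro u hu
          simp only [mem_filter, mem_univ, true_and, mem_union] at hu ⊢
          rw [adj] at hu
          rcases hu with ⟨_, h⟩ | ⟨_, h⟩
          · right; exact h.symm
          · left; exact h.symm
        calc ∑ u ∈ univ.filter (fun u => G.Adj (i, j0) u), f u
            ≤ ∑ u ∈ (univ.filter (fun u : Fin n × Fin m => u.1 = i) ∪
              univ.filter (fun u : Fin n × Fin m => u.2 = j0)), f u :=
              Finset.sum_le_sum_of_subset hsub
          _ ≤ ∑ u ∈ univ.filter (fun u : Fin n × Fin m => u.1 = i), f u +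
              ∑ u ∈ univ.filter (fun u : Fin n × Fin m => u.2 = j0), f u :=
              le_trans (Nat.le_add_right _ _) (le_of_eq Finset.sum_union_inter)
          _ = ∑ j, f (i, j) := by
              rw [sum_row_aux, sum_col_aux]
              simp [hj0]
      refine le_trans (min_le_right _ _) ?_
      rw [Fintype.sum_prod_type]
      calc 2 * n = ∑ _i : Fin n, 2 := by simp [mul_comm]
        _ ≤ _ := Finset.sum_le_sum fun i _ => hrow i
  have hne : S.Nonempty := ⟨_, hmem⟩
  exact le_antisymm (Nat.sInf_le hmem) (hlb _ (Nat.sInf_mem hne))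
end
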